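/- Let U ⊆ ℝ² be open, A : U → Matrix (Fin 2) (Fin 2) ℝ and F : U → ℝ² continuous, and let γ : J → U be a C¹ curve on an interval J ⊆ ℝ. Assume the set {t ∈ J : det A(γ(t)) ≠ 0} is dense in J. If γ is a solution of the diagonalized constrained system, i.e. det(A(γ(t))) • γ'(t) = adjugate(A(γ(t))) *ᵥ F(γ(t)) for all t ∈ J, then γ is a solution of the original constrained system, i.e. A(γ(t)) *ᵥ γ'(t) = F(γ(t)) for all t ∈ J. -/
import Mathlib


open Matrix

/-- Conversely, if a `C¹` curve `γ` solves the diagonalized system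
`det(A(x))·ẋ = adjugate(A(x))·F(x)` and the set of times at which `det A(γ(t)) ≠ 0`
is dense in `J`, then `γ` solves the original constrained system `A(x)·ẋ = F(x)`. -/
theorem diagonalized_to_constrained
    (U : Set (Fin 2 → ℝ)) (hU : IsOpen U)
    (A : (Fin 2 → ℝ) → Matrix (Fin 2) (Fin 2) ℝ)
    (F : (Fin 2 → ℝ) → (Fin 2 → ℝ))
    (hA : ContinuousOn A U) (hF : ContinuousOn F U)
    (J : Set ℝ) (hJ : J.OrdConnected)
    (γ γ' : ℝ → (Fin 2 → ℝ))
    (hmem : ∀ t ∈ J, γ t ∈ U)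
    (hdiff : ∀ t ∈ J, HasDerivWithinAt γ (γ' t) J t)
    (hC1 : ContinuousOn γ' J)
    (hdense : J ⊆ closure {t ∈ J | (A (γ t)).det ≠ 0})
    (hsol : ∀ t ∈ J, (A (γ t)).det • γ' t = (A (γ t)).adjugate *ᵥ F (γ t)) :
    ∀ t ∈ J, A (γ t) *ᵥ γ' t = F (γ t) := by
  set S : Set ℝ := {t ∈ J | (A (γ t)).det ≠ 0} with hS
  have hγcont : ContinuousOn γ J := fun t ht =>
    (hdiff t ht).continuousWithinAt
  have hfcont : ContinuousOn (fun t => A (γ t) *ᵥ γ' t - F (γ t)) J := by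
    apply ContinuousOn.sub
    · have hAγ : ContinuousOn (fun t => A (γ t)) J := hA.comp hγcont hmem
      apply continuousOn_pi.mpr
      intro i
      simp only [mulVec, dotProduct]
      apply continuousOn_finset_sum
      intro j _
      exact (((continuous_apply j).comp (continuous_apply i)).comp_continuousOn hAγ).mul
        ((continuous_apply j).comp_continuousOn hC1)
    · exact hF.comp hγcont hmem
  -- on S, the equation holds
  have hfS : ∀ t ∈ S, A (γ t) *ᵥ γ' t - F (γ t) = 0 := by
    rintro t ⟨ht, hdet⟩
    have h1 : A (γ t) *ᵥ ((A (γ t)).det • γ' t) = A (γ t) *ᵥ ((A (γ t)).adjugate *ᵥ F (γ t)) := by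
      rw [hsol t ht]
    rw [mulVec_smul, mulVec_mulVec, mul_adjugate, smul_mulVec] at h1
    have := smul_right_injective (Fin 2 → ℝ) hdet h1
    rw [one_mulVec] at this
    rw [this, sub_self]
  intro t ht
  have hne : (nhdsWithin t S).NeBot := mem_closure_iff_nhdsWithin_neBot.mp (hdense ht)
  have h1 : Filter.Tendsto (fun t => A (γ t) *ᵥ γ' t - F (γ t)) (nhdsWithin t S)
      (nhds (A (γ t) *ᵥ γ' t - F (γ t))) :=
    ((hfcont t ht).mono (fun x hx => hx.1)).tendsto
  have h2 : Filter.Tendsto (fun t => A (γ t) *ᵥ γ' t - F (γ t)) (nhdsWithin t S)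
      (nhds 0) := by
    refine Filter.Tendsto.congr' ?_ tendsto_const_nhds
    filter_upwards [self_mem_nhdsWithin] with x hx
    exact (hfS x hx).symm
  have := tendsto_nhds_unique h1 h2
  exact sub_eq_zero.mp this
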